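/- arXiv:2410.20988 — 5 statements merged into one kernel-verified Lean document; each statement's English description precedes it below -/
import Mathlib

section
/- Let U = (u⁰,u) and S = (s⁰,s) be four-vectors with η(U,U) = −1, u⁰ > 0, η(U,S) = 0, η(S,S) = σ². Then the map S ↦ ω := (1/σ)(s − s⁰/(1+u⁰) u) is a bijection from {S ∈ ℝ⁴ : η(U,S)=0, η(S,S)=σ²} onto the unit sphere S² ⊂ ℝ³, with inverse ω ↦ (σ ω·u, σ(ω + (ω·u)/(1+u⁰) u)). -/
/-- Minkowski inner product on ℝ⁴ written as a pair (time component, space part). -/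
def eta (X Y : ℝ × (Fin 3 → ℝ)) : ℝ := -(X.1 * Y.1) + ∑ i, X.2 i * Y.2 i

/-!
`σ ω` is the spatial part of `S` after the pure boost taking `U` to the rest frame `(1, 0)`.
Since `η(U, S) = 0` the boosted vector has vanishing time component, so `η(S, S) = σ²` says
exactly `|ω| = 1`, and the inverse boost of `(0, σ ω)` recovers `S`. Concretely, with
`|u|² = u⁰² - 1` and `u · s = u⁰ s⁰` one computes `σ (ω · u) = s⁰` and `σ² |ω|² = |s|² - s⁰²`.
-/

namespace SpinSphere

noncomputable section

variable {ι : Type*} [Fintype ι]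

def minkowski (X Y : ℝ × (ι → ℝ)) : ℝ := -(X.1 * Y.1) + X.2 ⬝ᵥ Y.2

def spinShell (u0 : ℝ) (u : ι → ℝ) (σ : ℝ) : Set (ℝ × (ι → ℝ)) :=
  {S | minkowski (u0, u) S = 0 ∧ minkowski S S = σ ^ 2}

def toSphere (u0 : ℝ) (u : ι → ℝ) (σ : ℝ) (S : ℝ × (ι → ℝ)) : ι → ℝ :=
  (1 / σ) • (S.2 - (S.1 / (1 + u0)) • u)

def ofSphere (u0 : ℝ) (u : ι → ℝ) (σ : ℝ) (ω : ι → ℝ) : ℝ × (ι → ℝ) :=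
  (σ * (ω ⬝ᵥ u), σ • (ω + ((ω ⬝ᵥ u) / (1 + u0)) • u))

variable {u0 σ : ℝ} {u : ι → ℝ}

theorem mem_spinShell_iff {S : ℝ × (ι → ℝ)} :
    S ∈ spinShell u0 u σ ↔ u ⬝ᵥ S.2 = u0 * S.1 ∧ S.2 ⬝ᵥ S.2 = σ ^ 2 + S.1 ^ 2 := by
  simp only [spinShell, minkowski, Set.mem_ofPred_eq]
  constructor <;> rintro ⟨h₁, h₂⟩ <;> exact ⟨by linarith, by linarith⟩

theorem dotProduct_self_eq_of_minkowski (hU : minkowski (u0, u) (u0, u) = -1) :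
    u ⬝ᵥ u = u0 ^ 2 - 1 := by
  simp only [minkowski] at hU
  linear_combination hU

theorem mul_toSphere_dotProduct (hσ : σ ≠ 0) (h1u : 1 + u0 ≠ 0)
    (hU : minkowski (u0, u) (u0, u) = -1) {S : ℝ × (ι → ℝ)} (hS : S ∈ spinShell u0 u σ) :
    σ * (toSphere u0 u σ S ⬝ᵥ u) = S.1 := by
  have huu := dotProduct_self_eq_of_minkowski hU
  have hus := (mem_spinShell_iff.mp hS).1
  simp only [toSphere, smul_dotProduct, sub_dotProduct, smul_eq_mul, dotProduct_comm S.2, hus,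
    huu]
  field_simp
  ring

theorem toSphere_dotProduct_self (hσ : σ ≠ 0) (h1u : 1 + u0 ≠ 0)
    (hU : minkowski (u0, u) (u0, u) = -1) {S : ℝ × (ι → ℝ)} (hS : S ∈ spinShell u0 u σ) :
    toSphere u0 u σ S ⬝ᵥ toSphere u0 u σ S = 1 := by
  have huu := dotProduct_self_eq_of_minkowski hU
  obtain ⟨hus, hss⟩ := mem_spinShell_iff.mp hS
  simp only [toSphere, smul_dotProduct, dotProduct_smul, sub_dotProduct, dotProduct_sub,
    smul_eq_mul, dotProduct_comm S.2 u, hus, huu, hss]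
  field_simp
  ring

theorem ofSphere_mem_spinShell (h1u : 1 + u0 ≠ 0) (hU : minkowski (u0, u) (u0, u) = -1)
    {ω : ι → ℝ} (hω : ω ⬝ᵥ ω = 1) : ofSphere u0 u σ ω ∈ spinShell u0 u σ := by
  have huu := dotProduct_self_eq_of_minkowski hU
  constructor <;>
  · simp only [minkowski, ofSphere, smul_dotProduct, dotProduct_smul, add_dotProduct,
      dotProduct_add, smul_eq_mul, dotProduct_comm u ω, hω, huu]
    field_simp
    ring

theorem ofSphere_toSphere (hσ : σ ≠ 0) (h1u : 1 + u0 ≠ 0)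
    (hU : minkowski (u0, u) (u0, u) = -1) {S : ℝ × (ι → ℝ)} (hS : S ∈ spinShell u0 u σ) :
    ofSphere u0 u σ (toSphere u0 u σ S) = S := by
  have hS1 := mul_toSphere_dotProduct hσ h1u hU hS
  refine Prod.ext hS1 ?_
  rw [ofSphere, smul_add, smul_smul, ← mul_div_assoc, hS1]
  simp [toSphere, smul_smul, hσ]

theorem toSphere_ofSphere (hσ : σ ≠ 0) (ω : ι → ℝ) : toSphere u0 u σ (ofSphere u0 u σ ω) = ω := by
  ext i
  simp only [toSphere, ofSphere, Pi.smul_apply, Pi.sub_apply, Pi.add_apply, smul_eq_mul]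
  field_simp
  ring

theorem invOn_ofSphere_toSphere (hσ : σ ≠ 0) (h1u : 1 + u0 ≠ 0)
    (hU : minkowski (u0, u) (u0, u) = -1) :
    Set.InvOn (ofSphere u0 u σ) (toSphere u0 u σ) (spinShell u0 u σ) {ω | ω ⬝ᵥ ω = 1} :=
  ⟨fun _ hS ↦ ofSphere_toSphere hσ h1u hU hS, fun ω _ ↦ toSphere_ofSphere hσ ω⟩

theorem bijOn_toSphere (hσ : σ ≠ 0) (h1u : 1 + u0 ≠ 0) (hU : minkowski (u0, u) (u0, u) = -1) :
    Set.BijOn (toSphere u0 u σ) (spinShell u0 u σ) {ω | ω ⬝ᵥ ω = 1} :=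
  (invOn_ofSphere_toSphere hσ h1u hU).bijOn (fun _ hS ↦ toSphere_dotProduct_self hσ h1u hU hS)
    (fun _ hω ↦ ofSphere_mem_spinShell h1u hU hω)

end

end SpinSphere

/-- For a fixed unit timelike `U = (u⁰,u)` (`η(U,U) = -1`, `u⁰ > 0`), the map
`S ↦ ω = (1/σ)(s − s⁰/(1+u⁰) u)` is a bijection from
`{S : η(U,S)=0, η(S,S)=σ²}` onto the unit sphere `S² ⊂ ℝ³`, with inverse
`ω ↦ (σ ω·u, σ(ω + (ω·u)/(1+u⁰) u))`. -/
theorem spin_sphere_bijection (u : Fin 3 → ℝ) (u0 σ : ℝ) (hσ : 0 < σ)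
    (hU : eta (u0, u) (u0, u) = -1) (hu0 : 0 < u0) :
    Set.BijOn
      (fun S : ℝ × (Fin 3 → ℝ) => fun i => (1 / σ) * (S.2 i - S.1 / (1 + u0) * u i))
      {S | eta (u0, u) S = 0 ∧ eta S S = σ ^ 2}
      {ω : Fin 3 → ℝ | ∑ i, ω i ^ 2 = 1} ∧
    Set.InvOn
      (fun ω : Fin 3 → ℝ =>
        (σ * ∑ i, ω i * u i, fun i => σ * (ω i + ((∑ j, ω j * u j) / (1 + u0)) * u i)))
      (fun S : ℝ × (Fin 3 → ℝ) => fun i => (1 / σ) * (S.2 i - S.1 / (1 + u0) * u i))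
      {S | eta (u0, u) S = 0 ∧ eta S S = σ ^ 2}
      {ω : Fin 3 → ℝ | ∑ i, ω i ^ 2 = 1} := by
  have h1u : 1 + u0 ≠ 0 := by positivity
  have hU' : SpinSphere.minkowski (u0, u) (u0, u) = -1 := hU
  have hsphere : {ω : Fin 3 → ℝ | ∑ i, ω i ^ 2 = 1} = {ω | ω ⬝ᵥ ω = 1} := by
    simp only [dotProduct, sq]
  rw [hsphere]
  exact ⟨SpinSphere.bijOn_toSphere hσ.ne' h1u hU',
    SpinSphere.invOn_ofSphere_toSphere hσ.ne' h1u hU'⟩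
end

section
/- Let S_{abc} = ε_{abcd} V^d be a totally antisymmetric spin current on 4-dimensional Minkowski space. Then the tensor H_{ab} = 8π[(S_{ca}{}^d + 2S^d{}_{(ca)})(S_{db}{}^c + 2S^c{}_{(db)}) + (1/2) g_{ab}(S_{cde} + 2S_{e(cd)})(S^{dec} + 2S^{c(de)})] reduces to H_{ab} = −16π(V_a V_b + (1/2) g_{ab} V^c V_c). -/
open Real

/-- Sign of an integer as a real number. -/
def sgnZ (x : ℤ) : ℝ := if 0 < x then 1 else if x < 0 then -1 else 0

/-- The Levi-Civita permutation symbol on four indices, `lc 0 1 2 3 = 1`. -/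
def lc (a b c d : Fin 4) : ℝ :=
  sgnZ ((b : ℤ) - a) * sgnZ ((c : ℤ) - a) * sgnZ ((d : ℤ) - a) *
    sgnZ ((c : ℤ) - b) * sgnZ ((d : ℤ) - b) * sgnZ ((d : ℤ) - c)

/-- The Minkowski metric `diag(−1,1,1,1)` (equal to its own inverse). -/
def eta4 (a b : Fin 4) : ℝ := if a = b then (if a = 0 then -1 else 1) else 0

/-
Total antisymmetry of `S` kills the symmetrized terms `2 S^d_(ca)`, leaving
`H_ab = 8π (S_ca^d S_db^c + (1/2) g_ab S_cde S^dec)`. Substituting `S_abc = ε_abcd V^d`, the first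
contraction reduces by the Lorentzian identity `ε^cd_fa ε_cdbh = -2 (g_fb g_ah - g_fh g_ab)` to
`-2 (V_a V_b - g_ab V^c V_c)`, and its trace gives `S_cde S^dec = -6 V^c V_c`.
-/

open Finset

-- Integer-valued copies of `lc` and `eta4`, so that identities between their finitely many
-- components can be checked by `decide`.
def lcInt (a b c d : Fin 4) : ℤ :=
  Int.sign ((b : ℤ) - a) * Int.sign ((c : ℤ) - a) * Int.sign ((d : ℤ) - a) *
    Int.sign ((c : ℤ) - b) * Int.sign ((d : ℤ) - b) * Int.sign ((d : ℤ) - c)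

def eta4Int (a b : Fin 4) : ℤ := if a = b then (if a = 0 then -1 else 1) else 0

lemma sgnZ_eq_sign (x : ℤ) : sgnZ x = x.sign := by
  rcases lt_trichotomy x 0 with h | rfl | h
  · simp [sgnZ, h, h.not_gt, Int.sign_eq_neg_one_of_neg]
  · simp [sgnZ]
  · simp [sgnZ, h, Int.sign_eq_one_of_pos]

lemma lc_eq_cast (a b c d : Fin 4) : lc a b c d = lcInt a b c d := by
  simp only [lc, lcInt, sgnZ_eq_sign]; push_cast; rfl

lemma eta4_eq_cast (a b : Fin 4) : eta4 a b = eta4Int a b := by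
  unfold eta4 eta4Int; split_ifs <;> simp

lemma lc_swap₂₃ (a b c d : Fin 4) : lc a c b d = -lc a b c d := by
  simp only [lc_eq_cast]
  exact_mod_cast (by decide +kernel : ∀ a b c d, lcInt a c b d = -lcInt a b c d) a b c d

lemma lc_rotate_left₃ (a b c d : Fin 4) : lc a b c d = lc b c a d := by
  simp only [lc_eq_cast]
  exact_mod_cast (by decide +kernel : ∀ a b c d, lcInt a b c d = lcInt b c a d) a b c d

lemma lc_rotate_right₃ (a b c d : Fin 4) : lc a b c d = lc a c d b := by
  simp only [lc_eq_cast]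
  exact_mod_cast (by decide +kernel : ∀ a b c d, lcInt a b c d = lcInt a c d b) a b c d

lemma lc_contract_two (a b f h : Fin 4) :
    ∑ c, ∑ d, eta4 c c * eta4 d d * lc c d f a * lc c d b h =
      -2 * (eta4 f b * eta4 a h - eta4 f h * eta4 a b) := by
  simp only [lc_eq_cast, eta4_eq_cast]
  exact_mod_cast (by decide +kernel : ∀ a b f h, ∑ c, ∑ d,
      eta4Int c c * eta4Int d d * lcInt c d f a * lcInt c d b h =
        -2 * (eta4Int f b * eta4Int a h - eta4Int f h * eta4Int a b)) a b f h

lemma eta4_of_ne {a b : Fin 4} (h : a ≠ b) : eta4 a b = 0 := if_neg h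

lemma eta4_mul_self (a : Fin 4) : eta4 a a * eta4 a a = 1 := by
  simp only [eta4, if_true]; split_ifs <;> norm_num

lemma sum_mul_eta4 (f : Fin 4 → ℝ) (b : Fin 4) : ∑ a, f a * eta4 a b = f b * eta4 b b :=
  Fintype.sum_eq_single b fun a h => by rw [eta4_of_ne h, mul_zero]

lemma sum_eta4_mul (f : Fin 4 → ℝ) (a : Fin 4) : ∑ b, eta4 a b * f b = eta4 a a * f a :=
  Fintype.sum_eq_single a fun b h => by rw [eta4_of_ne (Ne.symm h), zero_mul]

lemma sum_comm_pairs {α β γ δ M : Type*} [Fintype α] [Fintype β] [Fintype γ] [Fintype δ]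
    [AddCommMonoid M] (g : α → β → γ → δ → M) :
    ∑ a, ∑ b, ∑ c, ∑ d, g a b c d = ∑ c, ∑ d, ∑ a, ∑ b, g a b c d := by
  simpa only [Fintype.sum_prod_type] using
    sum_comm (s := univ) (t := univ) (f := fun (p : α × β) (q : γ × δ) => g p.1 p.2 q.1 q.2)

def spinCurrent (V : Fin 4 → ℝ) (a b c : Fin 4) : ℝ := ∑ d, lc a b c d * V d

lemma spinCurrent_swap (V : Fin 4 → ℝ) (a b c : Fin 4) :
    spinCurrent V a c b = -spinCurrent V a b c := by
  rw [spinCurrent, spinCurrent, ← sum_neg_distrib]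
  exact sum_congr rfl fun d _ => by rw [lc_swap₂₃, neg_mul]

lemma spinCurrent_contract_two (V : Fin 4 → ℝ) (a b : Fin 4) :
    ∑ c, ∑ d, eta4 c c * eta4 d d * spinCurrent V c a d * spinCurrent V d b c =
      -2 * (eta4 a a * V a * (eta4 b b * V b) - eta4 a b * ∑ c, eta4 c c * V c * V c) := by
  have expand : ∀ c d, eta4 c c * eta4 d d * spinCurrent V c a d * spinCurrent V d b c =
      ∑ f, ∑ h, V f * V h * (eta4 c c * eta4 d d * lc c d f a * lc c d b h) := by
    intro c d
    rw [spinCurrent, spinCurrent, mul_assoc, sum_mul_sum]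
    simp only [mul_sum]
    refine sum_congr rfl fun f _ => sum_congr rfl fun h _ => ?_
    rw [lc_rotate_right₃ c a d f, ← lc_rotate_left₃ c d b h]
    ring
  calc _ = ∑ f, ∑ h, V f * V h *
        ∑ c, ∑ d, eta4 c c * eta4 d d * lc c d f a * lc c d b h := by
        simp only [expand, mul_sum]
        exact sum_comm_pairs _
    _ = ∑ f, ∑ h, V f * V h * (-2 * (eta4 f b * eta4 a h - eta4 f h * eta4 a b)) := by
        simp only [lc_contract_two]
    _ = -2 * ((∑ f, V f * eta4 f b) * ∑ h, eta4 a h * V h) +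
          2 * eta4 a b * ∑ f, (∑ h, eta4 f h * V h) * V f := by
        rw [sum_mul_sum]
        simp only [mul_sum, sum_mul, ← sum_add_distrib]
        exact sum_congr rfl fun f _ => sum_congr rfl fun h _ => by ring
    _ = _ := by
        simp only [sum_mul_eta4, sum_eta4_mul]
        ring

lemma spinCurrent_contract_three (V : Fin 4 → ℝ) :
    ∑ c, ∑ d, ∑ e, eta4 c c * eta4 d d * eta4 e e * spinCurrent V c d e * spinCurrent V d e c =
      -6 * ∑ c, eta4 c c * V c * V c := by
  set Q := ∑ c, eta4 c c * V c * V c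
  calc _ = ∑ e, eta4 e e *
        -∑ c, ∑ d, eta4 c c * eta4 d d * spinCurrent V c e d * spinCurrent V d e c := by
        rw [sum_comm_cycle]
        simp only [mul_neg, mul_sum, ← sum_neg_distrib]
        refine sum_congr rfl fun e _ => sum_congr rfl fun c _ => sum_congr rfl fun d _ => ?_
        rw [spinCurrent_swap V c e d]
        ring
    _ = ∑ e, (2 * (eta4 e e * V e * V e) - 2 * Q) := by
        refine sum_congr rfl fun e _ => ?_
        rw [spinCurrent_contract_two]
        linear_combination (2 * eta4 e e * V e * V e - 2 * Q) * eta4_mul_self e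
    _ = -6 * Q := by
        simp only [sum_sub_distrib, ← mul_sum, sum_const, card_univ, Fintype.card_fin, nsmul_eq_mul]
        ring

/-- For a totally antisymmetric spin current `S_{abc} = ε_{abcd} V^d` on Minkowski
space, the tensor `H_{ab}` of Einstein-Cartan theory reduces to
`H_{ab} = −16π (V_a V_b + (1/2) g_{ab} V^c V_c)`. -/
theorem H_totally_antisymmetric (V : Fin 4 → ℝ) :
    let S : Fin 4 → Fin 4 → Fin 4 → ℝ := fun a b c => ∑ d, lc a b c d * V d
    -- third index raised
    let S3 : Fin 4 → Fin 4 → Fin 4 → ℝ := fun a b c => ∑ e, S a b e * eta4 e c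
    -- first index raised
    let S1 : Fin 4 → Fin 4 → Fin 4 → ℝ := fun a b c => ∑ e, eta4 a e * S e b c
    -- all indices raised
    let Sup : Fin 4 → Fin 4 → Fin 4 → ℝ := fun a b c =>
      ∑ e, ∑ f, ∑ h, eta4 a e * eta4 b f * eta4 c h * S e f h
    let Vlow : Fin 4 → ℝ := fun a => ∑ b, eta4 a b * V b
    let H : Fin 4 → Fin 4 → ℝ := fun a b =>
      8 * π * ((∑ c, ∑ d, (S3 c a d + (S1 d c a + S1 d a c)) *
          (S3 d b c + (S1 c d b + S1 c b d))) +
        (1 / 2) * eta4 a b * ∑ c, ∑ d, ∑ e,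
          (S c d e + (S e c d + S e d c)) * (Sup d e c + (Sup c d e + Sup c e d)))
    ∀ a b, H a b = -16 * π * (Vlow a * Vlow b + (1 / 2) * eta4 a b * ∑ c, Vlow c * V c) := by
  intro S S3 S1 Sup Vlow H a b
  have hS : ∀ x y z, S x y z = spinCurrent V x y z := fun _ _ _ => rfl
  have raise3 : ∀ x y z, S3 x y z = spinCurrent V x y z * eta4 z z := fun x y z =>
    sum_mul_eta4 _ z
  have raise1 : ∀ x y z, S1 x y z = eta4 x x * spinCurrent V x y z := fun x y z =>
    sum_eta4_mul (fun e => spinCurrent V e y z) x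
  have raiseAll : ∀ x y z,
      Sup x y z = eta4 x x * (eta4 y y * (eta4 z z * spinCurrent V x y z)) := by
    intro x y z
    simp only [Sup, hS, mul_assoc, ← mul_sum, sum_eta4_mul]
  have lower : ∀ x, Vlow x = eta4 x x * V x := fun x => sum_eta4_mul V x
  have first : ∑ c, ∑ d, (S3 c a d + (S1 d c a + S1 d a c)) * (S3 d b c + (S1 c d b + S1 c b d)) =
      -2 * (Vlow a * Vlow b - eta4 a b * ∑ c, Vlow c * V c) := by
    simp only [lower, ← spinCurrent_contract_two]
    refine sum_congr rfl fun c _ => sum_congr rfl fun d _ => ?_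
    rw [raise3, raise3, raise1, raise1, raise1, raise1, spinCurrent_swap V d a c,
      spinCurrent_swap V c b d]
    ring
  have second : ∑ c, ∑ d, ∑ e,
      (S c d e + (S e c d + S e d c)) * (Sup d e c + (Sup c d e + Sup c e d)) =
        -6 * ∑ c, Vlow c * V c := by
    simp only [lower, ← spinCurrent_contract_three]
    refine sum_congr rfl fun c _ => sum_congr rfl fun d _ => sum_congr rfl fun e _ => ?_
    simp only [hS, raiseAll]
    rw [spinCurrent_swap V e d c, spinCurrent_swap V c e d]
    ring
  simp only [H, first, second, lower]
  ring
end

section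
/- With u ∈ ℝ³, u⁰ = √(1+|u|²), ω ∈ S², σ > 0, s⁰ = σ ω·u, s = σ(ω + (ω·u)u/(1+u⁰)), and φ_{μν} = (1/2) ε_{μναβ} s^α u^β (with u⁰, s⁰ the time components), the components of φ satisfy (φ_{01}, φ_{02}, φ_{03}) = (σ/2)(ω × u) and (φ_{23}, φ_{31}, φ_{12}) = −(σ/2) u⁰ (√𝔥 ω), where (√𝔥)ᵢⱼ = δᵢⱼ − uᵢuⱼ/(u⁰(1+u⁰)). -/
section FrenkelAux
private lemma fe0 : ((0:Fin 4):ℤ) = 0 := rfl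
private lemma fe1 : ((1:Fin 4):ℤ) = 1 := rfl
private lemma fe2 : ((2:Fin 4):ℤ) = 2 := rfl
private lemma fe3 : ((3:Fin 4):ℤ) = 3 := rfl

private lemma k01 (S U : Fin 4 → ℝ) :
    (∑ a, ∑ b, lc 0 1 a b * S a * U b) = S 2 * U 3 - S 3 * U 2 := by
  simp only [Fin.sum_univ_four]; norm_num [lc, sgnZ, fe0, fe1, fe2, fe3]; ring
private lemma k02 (S U : Fin 4 → ℝ) :
    (∑ a, ∑ b, lc 0 2 a b * S a * U b) = S 3 * U 1 - S 1 * U 3 := by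
  simp only [Fin.sum_univ_four]; norm_num [lc, sgnZ, fe0, fe1, fe2, fe3]; ring
private lemma k03 (S U : Fin 4 → ℝ) :
    (∑ a, ∑ b, lc 0 3 a b * S a * U b) = S 1 * U 2 - S 2 * U 1 := by
  simp only [Fin.sum_univ_four]; norm_num [lc, sgnZ, fe0, fe1, fe2, fe3]; ring
private lemma k23 (S U : Fin 4 → ℝ) :
    (∑ a, ∑ b, lc 2 3 a b * S a * U b) = S 0 * U 1 - S 1 * U 0 := by
  simp only [Fin.sum_univ_four]; norm_num [lc, sgnZ, fe0, fe1, fe2, fe3]; ring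
private lemma k31 (S U : Fin 4 → ℝ) :
    (∑ a, ∑ b, lc 3 1 a b * S a * U b) = S 0 * U 2 - S 2 * U 0 := by
  simp only [Fin.sum_univ_four]; norm_num [lc, sgnZ, fe0, fe1, fe2, fe3]; ring
private lemma k12 (S U : Fin 4 → ℝ) :
    (∑ a, ∑ b, lc 1 2 a b * S a * U b) = S 0 * U 3 - S 3 * U 0 := by
  simp only [Fin.sum_univ_four]; norm_num [lc, sgnZ, fe0, fe1, fe2, fe3]; ring

private lemma ele (σ c oi oj ui uj : ℝ) :
    (1/2) * (σ * (oi + c * ui) * uj - σ * (oj + c * uj) * ui) =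
      (σ/2) * (oi * uj - oj * ui) := by ring

private lemma mag (σ u0 oi ui P : ℝ) (h1 : (0:ℝ) < 1 + u0) (hu0 : (0:ℝ) < u0) :
    (1/2) * ((σ * P) * ui - σ * (oi + P / (1 + u0) * ui) * u0) =
      -(σ/2) * u0 * (oi - ui * P / (u0 * (1 + u0))) := by
  field_simp
  ring

private lemma wcomp (x a b c o0 o1 o2 : ℝ) :
    ((1:ℝ) - a * x) * o0 + (0 - b * x) * o1 + (0 - c * x) * o2 =
      o0 - (a * o0 + b * o1 + c * o2) * x := by ring
end FrenkelAux

/-- Components of the Frenkel tensor `φ_{μν} = (1/2) ε_{μναβ} s^α u^β` in the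
coordinates `(u,ω)`: `(φ_{01},φ_{02},φ_{03}) = (σ/2)(ω × u)` and
`(φ_{23},φ_{31},φ_{12}) = −(σ/2) u⁰ (√𝔥 ω)`. -/
theorem frenkel_tensor_components (u ω : Fin 3 → ℝ) (σ : ℝ) (hσ : 0 < σ)
    (hω : ∑ i, ω i ^ 2 = 1) :
    let u0 : ℝ := Real.sqrt (1 + ∑ i, u i ^ 2)
    let s0 : ℝ := σ * ∑ i, ω i * u i
    let s : Fin 3 → ℝ := fun i => σ * (ω i + ((∑ j, ω j * u j) / (1 + u0)) * u i)
    let U : Fin 4 → ℝ := Fin.cons u0 u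
    let S : Fin 4 → ℝ := Fin.cons s0 s
    let φ : Fin 4 → Fin 4 → ℝ := fun μ ν => (1 / 2) * ∑ a, ∑ b, lc μ ν a b * S a * U b
    let sqh : Fin 3 → Fin 3 → ℝ := fun i j =>
      (if i = j then 1 else 0) - u i * u j / (u0 * (1 + u0))
    let w : Fin 3 → ℝ := fun i => ∑ j, sqh i j * ω j
    (∀ i : Fin 3, φ 0 i.succ = (σ / 2) * crossProduct ω u i) ∧
    φ 2 3 = -(σ / 2) * u0 * w 0 ∧ φ 3 1 = -(σ / 2) * u0 * w 1 ∧
    φ 1 2 = -(σ / 2) * u0 * w 2 := by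
  intro u0 s0 s U S φ sqh w
  have hu0 : 0 < u0 := Real.sqrt_pos.mpr (by positivity)
  have h1 : (0:ℝ) < 1 + u0 := by linarith
  have hS0 : S 0 = s0 := rfl
  have hS1 : S 1 = s 0 := rfl
  have hS2 : S 2 = s 1 := rfl
  have hS3 : S 3 = s 2 := rfl
  have hU0 : U 0 = u0 := rfl
  have hU1 : U 1 = u 0 := rfl
  have hU2 : U 2 = u 1 := rfl
  have hU3 : U 3 = u 2 := rfl
  have hP : ∀ i : Fin 3, u i * (∑ j, ω j * u j) / (u0 * (1 + u0)) =
      (u i * u 0 / (u0 * (1+u0)) * ω 0 + u i * u 1 / (u0 * (1+u0)) * ω 1 +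
        u i * u 2 / (u0 * (1+u0)) * ω 2) := by
    intro i
    rw [Fin.sum_univ_three]
    field_simp
  have hw : ∀ i : Fin 3, w i = ω i - u i * (∑ j, ω j * u j) / (u0 * (1 + u0)) := by
    intro i
    have : w i = sqh i 0 * ω 0 + sqh i 1 * ω 1 + sqh i 2 * ω 2 := Fin.sum_univ_three _
    rw [this, hP i]
    have h0 : sqh i 0 = (if i = 0 then 1 else 0) - u i * u 0 / (u0 * (1 + u0)) := rfl
    have h1' : sqh i 1 = (if i = 1 then 1 else 0) - u i * u 1 / (u0 * (1 + u0)) := rfl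
    have h2 : sqh i 2 = (if i = 2 then 1 else 0) - u i * u 2 / (u0 * (1 + u0)) := rfl
    rw [h0, h1', h2]
    fin_cases i <;> simp <;> ring
  have hc0 : crossProduct ω u 0 = ω 1 * u 2 - ω 2 * u 1 := rfl
  have hc1 : crossProduct ω u 1 = ω 2 * u 0 - ω 0 * u 2 := rfl
  have hc2 : crossProduct ω u 2 = ω 0 * u 1 - ω 1 * u 0 := rfl
  refine ⟨?_, ?_, ?_, ?_⟩
  · intro i
    fin_cases i
    · show (1/2) * (∑ a, ∑ b, lc 0 1 a b * S a * U b) = (σ/2) * crossProduct ω u 0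
      rw [k01, hS2, hS3, hU2, hU3, hc0]
      exact ele σ _ _ _ _ _
    · show (1/2) * (∑ a, ∑ b, lc 0 2 a b * S a * U b) = (σ/2) * crossProduct ω u 1
      rw [k02, hS3, hS1, hU3, hU1, hc1]
      exact ele σ _ _ _ _ _
    · show (1/2) * (∑ a, ∑ b, lc 0 3 a b * S a * U b) = (σ/2) * crossProduct ω u 2
      rw [k03, hS1, hS2, hU1, hU2, hc2]
      exact ele σ _ _ _ _ _
  · show (1/2) * (∑ a, ∑ b, lc 2 3 a b * S a * U b) = _
    rw [k23, hS0, hS1, hU0, hU1, hw 0]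
    exact mag σ u0 _ _ _ h1 hu0
  · show (1/2) * (∑ a, ∑ b, lc 3 1 a b * S a * U b) = _
    rw [k31, hS0, hS2, hU0, hU2, hw 1]
    exact mag σ u0 _ _ _ h1 hu0
  · show (1/2) * (∑ a, ∑ b, lc 1 2 a b * S a * U b) = _
    rw [k12, hS0, hS3, hU0, hU3, hw 2]
    exact mag σ u0 _ _ _ h1 hu0
end

section
/- Let u ∈ ℝ³ with u ≠ 0, v = u/√(1+|u|²), and ω ∈ S² with ω not parallel to v. Define ξ = −(ω·v)/|ω × v|² · ω × (ω × v). Then ξ·ω = 0 and the spherical (tangential) divergence of ξ over S² equals 1, i.e. ∂̸_ω · ξ = 1, where ∂̸_{ωⁱ} = (δⁱⱼ − ωᵢωʲ)∂_{ωʲ}. -/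
/-!
Write `ξ = f • g` with `g(w) = w × (w × v) = (w ⬝ v) w - |w|² v` and
`f(w) = -(w ⬝ v) / |w × v|²`. Since `g(ω)` is tangent to the sphere, the product rule for the
tangential divergence reads `∂̸ · ξ = ∂_{g(ω)} f + f(ω) (∂̸ · g)`. Along `g(ω)`, `w ⬝ v` changes at
rate `-|ω × v|²` and `|w × v|²` at rate `2 (ω ⬝ v) |ω × v|²`, so
`∂_{g(ω)} f = 1 + 2 (ω ⬝ v)² / |ω × v|²`, while `∂̸ · g = 2 (ω ⬝ v)`; the two `(ω ⬝ v)²` terms cancel.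
-/

open Matrix

section Calculus

variable {𝕜 ι E : Type*} [NontriviallyNormedField 𝕜] [Fintype ι] [NormedAddCommGroup E]
  [NormedSpace 𝕜 E] {x : E}

noncomputable def dotProductCLM (a : ι → 𝕜) : (ι → 𝕜) →L[𝕜] 𝕜 :=
  ∑ i, a i • ContinuousLinearMap.proj i

@[simp]
theorem dotProductCLM_apply (a b : ι → 𝕜) : dotProductCLM a b = a ⬝ᵥ b := by
  simp [dotProductCLM, dotProduct]

theorem HasFDerivAt.dotProduct {f g : E → ι → 𝕜} {f' g' : E →L[𝕜] ι → 𝕜}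
    (hf : HasFDerivAt f f' x) (hg : HasFDerivAt g g' x) :
    HasFDerivAt (fun y => f y ⬝ᵥ g y)
      ((dotProductCLM (f x)).comp g' + (dotProductCLM (g x)).comp f') x := by
  refine (HasFDerivAt.fun_sum fun i _ =>
    (hasFDerivAt_pi'.1 hf i).fun_mul (hasFDerivAt_pi'.1 hg i)).congr_fderiv ?_
  ext h
  simp [_root_.dotProduct, Finset.sum_add_distrib]

theorem HasFDerivAt.fun_div {c d : E → 𝕜} {c' d' : E →L[𝕜] 𝕜} (hc : HasFDerivAt c c' x)
    (hd : HasFDerivAt d d' x) (hx : d x ≠ 0) :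
    HasFDerivAt (fun y => c y / d y) ((d x ^ 2)⁻¹ • (d x • c' - c x • d')) x := by
  simp only [div_eq_mul_inv]
  refine (hc.fun_mul ((hasDerivAt_inv hx).comp_hasFDerivAt x hd)).congr_fderiv ?_
  ext h
  simp only [Function.comp_apply, _root_.add_apply, _root_.smul_apply, smul_eq_mul, neg_mul,
    mul_neg, _root_.sub_apply]
  field_simp
  ring

theorem hasFDerivAt_dotProduct_const (v x : ι → 𝕜) :
    HasFDerivAt (fun w => w ⬝ᵥ v) (dotProductCLM v) x := by
  refine ((hasFDerivAt_id x).dotProduct (hasFDerivAt_const v x)).congr_fderiv ?_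
  ext h
  simp

theorem hasFDerivAt_dotProduct_self (x : ι → 𝕜) :
    HasFDerivAt (fun w => w ⬝ᵥ w) (2 • dotProductCLM x) x := by
  refine ((hasFDerivAt_id x).dotProduct (hasFDerivAt_id x)).congr_fderiv ?_
  ext h
  simp [two_mul]

theorem ContinuousLinearMap.apply_eq_sum_smul_single [DecidableEq ι] {M : Type*}
    [AddCommMonoid M] [Module 𝕜 M] [TopologicalSpace M] (D : (ι → 𝕜) →L[𝕜] M) (x : ι → 𝕜) :
    D x = ∑ j, x j • D (Pi.single j 1) := by
  conv_lhs => rw [pi_eq_sum_univ' x]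
  simp [map_sum]

end Calculus

section TangentialDivergence

variable {ι : Type*} [Fintype ι] [DecidableEq ι]

/-- `∂̸ · F` at `ω`, where `∂̸_i = (δ_ij - ω_i ω_j) ∂_j`. -/
noncomputable def tangentialDiv (F : (ι → ℝ) → ι → ℝ) (ω : ι → ℝ) : ℝ :=
  ∑ i, ∑ j, ((if i = j then (1 : ℝ) else 0) - ω i * ω j) *
    fderiv ℝ (fun w => F w i) ω (Pi.single j 1)

theorem HasFDerivAt.tangentialDiv_eq {F : (ι → ℝ) → ι → ℝ} {D : (ι → ℝ) →L[ℝ] ι → ℝ}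
    {ω : ι → ℝ} (hF : HasFDerivAt F D ω) :
    tangentialDiv F ω = ∑ i, D (Pi.single i 1) i - ω ⬝ᵥ D ω := by
  have hcomp (i : ι) : fderiv ℝ (fun w => F w i) ω = (ContinuousLinearMap.proj i).comp D :=
    (hasFDerivAt_pi'.1 hF i).fderiv
  simp only [tangentialDiv, hcomp, D.apply_eq_sum_smul_single ω]
  simp [sub_mul, Finset.sum_sub_distrib, _root_.dotProduct, Finset.mul_sum, mul_assoc]

theorem tangentialDiv_smul {f : (ι → ℝ) → ℝ} {g : (ι → ℝ) → ι → ℝ} {f' : (ι → ℝ) →L[ℝ] ℝ}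
    {G : (ι → ℝ) →L[ℝ] ι → ℝ} {ω : ι → ℝ} (hf : HasFDerivAt f f' ω) (hg : HasFDerivAt g G ω)
    (htan : g ω ⬝ᵥ ω = 0) :
    tangentialDiv (fun w => f w • g w) ω = f' (g ω) + f ω * tangentialDiv g ω := by
  rw [(hf.fun_smul hg).tangentialDiv_eq, hg.tangentialDiv_eq, f'.apply_eq_sum_smul_single (g ω)]
  simp only [_root_.add_apply, _root_.smul_apply, ContinuousLinearMap.smulRight_apply,
    Pi.add_apply, Pi.smul_apply, smul_eq_mul, mul_comm (f' _), Finset.sum_add_distrib,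
    dotProduct_comm ω, add_dotProduct, smul_dotProduct, htan, zero_mul, add_zero, mul_sub,
    Finset.mul_sum]
  ring

end TangentialDivergence

section Xi

variable {ι : Type*} [Fintype ι]

/-- `ξ`, with `w × (w × v)` and `|w × v|²` expanded into dot products so that it makes sense in
any dimension. -/
noncomputable def xi (v w : ι → ℝ) : ι → ℝ :=
  (-(w ⬝ᵥ v) / ((w ⬝ᵥ w) * (v ⬝ᵥ v) - (w ⬝ᵥ v) ^ 2)) • ((w ⬝ᵥ v) • w - (w ⬝ᵥ w) • v)

theorem smul_sub_smul_dotProduct_self (v w : ι → ℝ) :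
    ((w ⬝ᵥ v) • w - (w ⬝ᵥ w) • v) ⬝ᵥ w = 0 := by
  simp [sub_dotProduct, dotProduct_comm v w, mul_comm]

theorem xi_dotProduct_self (v w : ι → ℝ) : xi v w ⬝ᵥ w = 0 := by
  rw [xi, smul_dotProduct, smul_sub_smul_dotProduct_self, smul_zero]

theorem hasFDerivAt_smul_sub_smul (v ω : ι → ℝ) :
    HasFDerivAt (fun w => (w ⬝ᵥ v) • w - (w ⬝ᵥ w) • v)
      ((ω ⬝ᵥ v) • .id ℝ _ + (dotProductCLM v).smulRight ω -
        (2 • dotProductCLM ω).smulRight v) ω :=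
  ((hasFDerivAt_dotProduct_const v ω).fun_smul (hasFDerivAt_id ω)).fun_sub
    ((hasFDerivAt_dotProduct_self ω).smul_const v)

variable [DecidableEq ι]

theorem tangentialDiv_smul_sub_smul (v ω : ι → ℝ) :
    tangentialDiv (fun w => (w ⬝ᵥ v) • w - (w ⬝ᵥ w) • v) ω =
      (Fintype.card ι - 1) * (ω ⬝ᵥ v) := by
  rw [(hasFDerivAt_smul_sub_smul v ω).tangentialDiv_eq]
  simp only [_root_.sub_apply, _root_.add_apply, _root_.smul_apply, ContinuousLinearMap.id_apply,
    ContinuousLinearMap.smulRight_apply, dotProductCLM_apply, dotProduct_single, mul_one,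
    nsmul_eq_mul, Nat.cast_ofNat, Pi.sub_apply, Pi.add_apply, Pi.smul_apply, Pi.single_eq_same,
    smul_eq_mul, mul_assoc, Finset.sum_sub_distrib, Finset.sum_add_distrib, Finset.sum_const,
    Finset.card_univ, ← dotProduct.eq_1, dotProduct_comm v ω, ← Finset.mul_sum, dotProduct_sub,
    dotProduct_add, dotProduct_smul]
  ring

theorem tangentialDiv_xi (v ω : ι → ℝ) (hω : ω ⬝ᵥ ω = 1)
    (hQ : (ω ⬝ᵥ ω) * (v ⬝ᵥ v) - (ω ⬝ᵥ v) ^ 2 ≠ 0) :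
    tangentialDiv (xi v) ω =
      1 + (3 - Fintype.card ι) * (ω ⬝ᵥ v) ^ 2 / ((ω ⬝ᵥ ω) * (v ⬝ᵥ v) - (ω ⬝ᵥ v) ^ 2) := by
  have hA := hasFDerivAt_dotProduct_const v ω
  have hf := hA.fun_neg.fun_div
    (((hasFDerivAt_dotProduct_self ω).mul_const _).fun_sub (hA.pow 2)) hQ
  unfold xi
  rw [tangentialDiv_smul hf (hasFDerivAt_smul_sub_smul v ω) (smul_sub_smul_dotProduct_self v ω),
    tangentialDiv_smul_sub_smul]
  rw [hω, one_mul] at hQ ⊢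
  simp only [smul_neg, Nat.add_one_sub_one, pow_one, nsmul_eq_mul, Nat.cast_ofNat, neg_smul,
    sub_neg_eq_add, smul_add, one_smul, _root_.add_apply, _root_.neg_apply, _root_.smul_apply,
    dotProductCLM_apply, dotProduct_sub, dotProduct_smul, dotProduct_comm v ω, smul_eq_mul,
    _root_.sub_apply, hω, mul_one, sub_self, mul_zero, zero_sub, mul_neg]
  field_simp
  ring

end Xi

theorem crossProduct_dotProduct_self (v w : Fin 3 → ℝ) :
    w ⨯₃ v ⬝ᵥ w ⨯₃ v = (w ⬝ᵥ w) * (v ⬝ᵥ v) - (w ⬝ᵥ v) ^ 2 := by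
  rw [cross_dot_cross, dotProduct_comm v w, sq]

theorem xi_eq_crossProduct (v w : Fin 3 → ℝ) :
    xi v w = (-(∑ i, w i * v i) / ∑ i, (w ⨯₃ v) i ^ 2) • w ⨯₃ (w ⨯₃ v) := by
  have hsq : ∑ i, (w ⨯₃ v) i ^ 2 = w ⨯₃ v ⬝ᵥ w ⨯₃ v := by simp [dotProduct, sq]
  rw [hsq, crossProduct_dotProduct_self, cross_cross_eq_smul_sub_smul']
  rfl

theorem xi_tangential_divergence_one_general (u ω : Fin 3 → ℝ)
    (hω : ∑ i, ω i ^ 2 = 1)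
    (hpar : crossProduct ω (fun i => u i / Real.sqrt (1 + ∑ k, u k ^ 2)) ≠ 0) :
    let v : Fin 3 → ℝ := fun i => u i / Real.sqrt (1 + ∑ k, u k ^ 2)
    let ξ : (Fin 3 → ℝ) → Fin 3 → ℝ := fun w =>
      (-(∑ i, w i * v i) / ∑ i, (crossProduct w v) i ^ 2) •
        crossProduct w (crossProduct w v)
    (∑ i, ξ ω i * ω i = 0) ∧
    (∑ i, ∑ j, ((if i = j then (1 : ℝ) else 0) - ω i * ω j) *
        fderiv ℝ (fun w => ξ w i) ω (Pi.single j 1)) = 1 := by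
  intro v ξ
  have hξ : ξ = xi v := funext fun w => (xi_eq_crossProduct v w).symm
  have hωω : ω ⬝ᵥ ω = 1 := by simpa [dotProduct, sq] using hω
  have hQ : (ω ⬝ᵥ ω) * (v ⬝ᵥ v) - (ω ⬝ᵥ v) ^ 2 ≠ 0 := by
    rwa [← crossProduct_dotProduct_self, Ne, dotProduct_self_eq_zero]
  constructor
  · change ξ ω ⬝ᵥ ω = 0
    rw [hξ, xi_dotProduct_self]
  · change tangentialDiv ξ ω = 1
    rw [hξ, tangentialDiv_xi v ω hωω hQ]
    norm_num

/-- The vector field `ξ(ω) = −(ω·v)/|ω × v|² · ω × (ω × v)` with `v = u/√(1+|u|²)`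
is tangential (`ξ·ω = 0`) and has tangential divergence `∂̸_ω · ξ = 1` on the
unit sphere, away from `ω` parallel to `v`. -/
theorem xi_tangential_divergence_one (u ω : Fin 3 → ℝ) (hu : u ≠ 0)
    (hω : ∑ i, ω i ^ 2 = 1)
    (hpar : crossProduct ω (fun i => u i / Real.sqrt (1 + ∑ k, u k ^ 2)) ≠ 0) :
    let v : Fin 3 → ℝ := fun i => u i / Real.sqrt (1 + ∑ k, u k ^ 2)
    let ξ : (Fin 3 → ℝ) → Fin 3 → ℝ := fun w =>
      (-(∑ i, w i * v i) / ∑ i, (crossProduct w v) i ^ 2) •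
        crossProduct w (crossProduct w v)
    (∑ i, ξ ω i * ω i = 0) ∧
    (∑ i, ∑ j, ((if i = j then (1 : ℝ) else 0) - ω i * ω j) *
        fderiv ℝ (fun w => ξ w i) ω (Pi.single j 1)) = 1 :=
  xi_tangential_divergence_one_general u ω hω hpar
end

section
/- Let u ∈ ℝ³, u⁰ = √(1+|u|²), ω ∈ S², σ > 0, s⁰ = σω·u, s = σ(ω + (ω·u)u/(1+u⁰)). Given 𝐚, 𝐛 ∈ ℝ³, define (at γ = 0) yⁱ = (1/σ)(√𝔥)ⁱⱼ bʲ − ((√𝔥)ⱼᵏ/(1+u⁰))((s⁰/σ)δₖⁱ + ωₖuⁱ/u⁰) aʲ. Then ω·y = −(1/(σ²(u⁰)²)) (u⁰s − s⁰u)·(s⁰𝐚 − u⁰𝐛). In particular ω·y = 0 if and only if (u⁰s − s⁰u)·(s⁰𝐚 − u⁰𝐛) = 0. -/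
set_option maxHeartbeats 1600000 in
/-- With `yⁱ = (1/σ)(√𝔥)ⁱⱼ bʲ − ((√𝔥)ⱼᵏ/(1+u⁰))((s⁰/σ)δₖⁱ + ωₖuⁱ/u⁰) aʲ`
(the flat case `γ = 0`), one has
`ω·y = −(1/(σ²(u⁰)²))(u⁰s − s⁰u)·(s⁰𝐚 − u⁰𝐛)`; in particular `ω·y = 0` iff
`(u⁰s − s⁰u)·(s⁰𝐚 − u⁰𝐛) = 0`. -/
theorem omega_dot_y (u ω a b : Fin 3 → ℝ) (σ : ℝ) (hσ : 0 < σ)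
    (hω : ∑ i, ω i ^ 2 = 1) :
    let u0 : ℝ := Real.sqrt (1 + ∑ i, u i ^ 2)
    let s0 : ℝ := σ * ∑ i, ω i * u i
    let s : Fin 3 → ℝ := fun i => σ * (ω i + ((∑ j, ω j * u j) / (1 + u0)) * u i)
    let sqh : Fin 3 → Fin 3 → ℝ := fun i j =>
      (if i = j then 1 else 0) - u i * u j / (u0 * (1 + u0))
    let y : Fin 3 → ℝ := fun i =>
      (1 / σ) * (∑ j, sqh i j * b j) -
        (1 / (1 + u0)) * ∑ j, ∑ k,
          sqh j k * ((s0 / σ) * (if k = i then 1 else 0) + ω k * u i / u0) * a j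
    (∑ i, ω i * y i) =
        -(1 / (σ ^ 2 * u0 ^ 2)) *
          ∑ i, (u0 * s i - s0 * u i) * (s0 * a i - u0 * b i) ∧
      ((∑ i, ω i * y i) = 0 ↔
        (∑ i, (u0 * s i - s0 * u i) * (s0 * a i - u0 * b i)) = 0) := by
  intro u0 s0 s sqh y
  have hu0 : 0 < u0 := Real.sqrt_pos.2 (by positivity)
  have hu0' : u0 ≠ 0 := ne_of_gt hu0
  have h1 : (1 : ℝ) + u0 ≠ 0 := by positivity
  have hσ' : σ ≠ 0 := ne_of_gt hσ
  have key : (∑ i, ω i * y i) =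
      -(1 / (σ ^ 2 * u0 ^ 2)) *
        ∑ i, (u0 * s i - s0 * u i) * (s0 * a i - u0 * b i) := by
    simp only [y, s, s0, sqh, Fin.sum_univ_three, Fin.isValue]
    norm_num [Fin.ext_iff]
    field_simp
    ring
  refine ⟨key, ?_⟩
  rw [key]
  constructor
  · intro h
    have hc : -(1 / (σ ^ 2 * u0 ^ 2)) ≠ 0 := by
      simp only [ne_eq, neg_eq_zero, div_eq_zero_iff]
      push_neg
      constructor <;> [norm_num; positivity]
    exact (mul_eq_zero.mp h).resolve_left hc
  · intro h; rw [h, mul_zero]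
end
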